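/- arXiv:2602.21235 — 5 statements merged into one kernel-verified Lean document; each statement's English description precedes it below -/
import Mathlib

section
/- Let D : (ℕ → ℝ) → ℝ be an ℝ-linear map such that for every curve p : ℝ → (ℕ → ℝ) all of whose coordinate functions u ↦ p(u)(n) are infinitely differentiable, the composite D ∘ p : ℝ → ℝ is continuous. Then there exist N ∈ ℕ and real coefficients c₀, …, c_{N-1} such that D(x) = ∑_{i<N} c_i · x(i) for all x ∈ ℕ → ℝ; that is, D is a finite linear combination of the coordinate projections. -/
open Finset Metric

/-- sample points `1/(j+1)`, tending to `0`. -/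
noncomputable def tpt (j : ℕ) : ℝ := 1 / ((j : ℝ) + 1)

/-- polynomial vanishing at `0` and at `tpt 0, …, tpt (k-1)`. -/
noncomputable def qq (k : ℕ) (u : ℝ) : ℝ := u * ∏ i ∈ Finset.range k, (u - tpt i)

/-- recursively chosen coefficients making `∑_{k ≤ j} cc k * qq k (tpt j) = 1`. -/
noncomputable def cc : ℕ → ℝ
  | k =>
    (1 - ∑ i ∈ (Finset.range k).attach, cc i.1 * qq i.1 (tpt k)) / qq k (tpt k)
  termination_by k => k
  decreasing_by exact Finset.mem_range.1 i.2

lemma tpt_pos (j : ℕ) : 0 < tpt j := by unfold tpt; positivity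

lemma tpt_anti {i j : ℕ} (h : i < j) : tpt j < tpt i := by
  unfold tpt
  apply one_div_lt_one_div_of_lt (by positivity)
  have : (i : ℝ) < j := by exact_mod_cast h
  linarith

lemma qq_zero : ∀ k, qq k 0 = 0 := fun k => by unfold qq; simp

lemma qq_eq_zero {k j : ℕ} (h : j < k) : qq k (tpt j) = 0 := by
  unfold qq
  have hz : tpt j - tpt j = 0 := sub_self _
  rw [Finset.prod_eq_zero (Finset.mem_range.2 h) hz, mul_zero]

lemma qq_ne_zero (k : ℕ) : qq k (tpt k) ≠ 0 := by
  unfold qq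
  apply mul_ne_zero (tpt_pos k).ne'
  apply Finset.prod_ne_zero_iff.2
  intro i hi
  have := tpt_anti (Finset.mem_range.1 hi)
  exact sub_ne_zero.2 (by linarith)

lemma cc_spec (j : ℕ) : ∑ k ∈ Finset.range (j + 1), cc k * qq k (tpt j) = 1 := by
  rw [Finset.sum_range_succ]
  have hcc : cc j = (1 - ∑ i ∈ Finset.range j, cc i * qq i (tpt j)) / qq j (tpt j) := by
    rw [cc]
    congr 1
    rw [← Finset.sum_attach (Finset.range j) (fun i => cc i * qq i (tpt j))]
  rw [hcc, div_mul_cancel₀ _ (qq_ne_zero j)]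
  ring

lemma qq_contDiff (k : ℕ) : ContDiff ℝ (⊤ : ℕ∞) (qq k) := by
  unfold qq
  apply contDiff_id.mul
  induction k with
  | zero => simpa using contDiff_const
  | succ n ih =>
      have : (fun u : ℝ => ∏ i ∈ Finset.range (n + 1), (u - tpt i))
          = fun u => (∏ i ∈ Finset.range n, (u - tpt i)) * (u - tpt n) := by
        funext u; rw [Finset.prod_range_succ]
      rw [this]
      exact ih.mul (contDiff_id.sub contDiff_const)

/-- Continuity-hypothesis form of Proposition 3.2: an ℝ-linear functional on
`ℕ → ℝ` whose composite with every componentwise-smooth curve is continuous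
is a finite linear combination of coordinate projections. -/
theorem stmt_0 (D : (ℕ → ℝ) →ₗ[ℝ] ℝ)
    (hD : ∀ p : ℝ → ℕ → ℝ, (∀ n, ContDiff ℝ (⊤ : ℕ∞) fun u => p u n) →
      Continuous (D ∘ p)) :
    ∃ (N : ℕ) (c : ℕ → ℝ), ∀ x : ℕ → ℝ, D x = ∑ i ∈ Finset.range N, c i * x i := by
  by_cases h : ∃ N : ℕ, ∀ x : ℕ → ℝ, (∀ i < N, x i = 0) → D x = 0
  · obtain ⟨N, hN⟩ := h
    refine ⟨N, fun i => D (Pi.single i 1), fun x => ?_⟩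
    set s : ℕ → ℝ := ∑ i ∈ Finset.range N, x i • (Pi.single i 1 : ℕ → ℝ) with hs
    have hsx : ∀ i < N, s i = x i := by
      intro i hi
      rw [hs, Finset.sum_apply, Finset.sum_eq_single_of_mem i (Finset.mem_range.2 hi)]
      · simp
      · intro b _ hb; simp [Pi.single_apply, hb]
    have h1 : D (x - s) = 0 := hN _ (fun i hi => by simp [Pi.sub_apply, hsx i hi])
    have h2 : D x = D s := by
      have hx : x = s + (x - s) := by abel
      rw [hx, map_add, h1, add_zero]
    rw [h2, hs, map_sum]
    refine Finset.sum_congr rfl fun i _ => ?_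
    rw [map_smul]; simp [mul_comm]
  · exfalso
    push_neg at h
    choose y hy1 hy2 using h
    set x : ℕ → ℕ → ℝ := fun k => (D (y k))⁻¹ • y k with hx
    have hDx : ∀ k, D (x k) = 1 := fun k => by
      rw [hx]; simp [map_smul, inv_mul_cancel₀ (hy2 k)]
    have hx0 : ∀ k, ∀ i < k, x k i = 0 := fun k i hi => by
      simp [hx, hy1 k i hi]
    -- the curve
    set p : ℝ → ℕ → ℝ := fun u n => ∑ k ∈ Finset.range (n + 1), cc k * qq k u * x k n
      with hp
    have hsmooth : ∀ n, ContDiff ℝ (⊤ : ℕ∞) fun u => p u n := by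
      intro n
      apply ContDiff.sum
      intro k _
      exact (contDiff_const.mul (qq_contDiff k)).mul contDiff_const
    have hcont := hD p hsmooth
    have hp0 : p 0 = 0 := by
      funext n
      simp only [hp]
      exact Finset.sum_eq_zero fun k _ => by rw [qq_zero k, mul_zero, zero_mul]
    -- value of the curve at the sample points
    have hpt : ∀ j : ℕ, p (tpt j)
        = ∑ k ∈ Finset.range (j + 1), (cc k * qq k (tpt j)) • x k := by
      intro j
      funext n
      rw [Finset.sum_apply]
      simp only [hp, Pi.smul_apply, smul_eq_mul]
      have hL : ∑ k ∈ Finset.range (n + 1), cc k * qq k (tpt j) * x k n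
          = ∑ k ∈ Finset.range (n + j + 2), cc k * qq k (tpt j) * x k n := by
        apply Finset.sum_subset
        · intro a ha
          rw [Finset.mem_range] at *
          omega
        · intro a _ ha
          rw [Finset.mem_range] at ha
          push_neg at ha
          have : n < a := by omega
          rw [hx0 a n this, mul_zero]
      have hR : ∑ k ∈ Finset.range (j + 1), cc k * qq k (tpt j) * x k n
          = ∑ k ∈ Finset.range (n + j + 2), cc k * qq k (tpt j) * x k n := by
        apply Finset.sum_subset
        · intro a ha
          rw [Finset.mem_range] at *
          omega
        · intro a _ ha
          rw [Finset.mem_range] at ha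
          push_neg at ha
          have : j < a := by omega
          rw [qq_eq_zero this, mul_zero, zero_mul]
      rw [hL, ← hR]
    have hDpt : ∀ j : ℕ, D (p (tpt j)) = 1 := by
      intro j
      rw [hpt j, map_sum]
      have : ∀ k ∈ Finset.range (j + 1),
          D ((cc k * qq k (tpt j)) • x k) = cc k * qq k (tpt j) := by
        intro k _
        rw [map_smul, smul_eq_mul, hDx k, mul_one]
      rw [Finset.sum_congr rfl this]
      exact cc_spec j
    -- contradiction via the sequence tpt j → 0
    have htend : Filter.Tendsto tpt Filter.atTop (nhds 0) := by
      unfold tpt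
      exact tendsto_one_div_add_atTop_nhds_zero_nat
    have h1 : Filter.Tendsto (fun j : ℕ => (D ∘ p) (tpt j))
        Filter.atTop (nhds ((D ∘ p) 0)) :=
      (hcont.tendsto 0).comp htend
    have h2 : (fun j : ℕ => (D ∘ p) (tpt j)) = fun _ => (1 : ℝ) := by
      funext j
      simp only [Function.comp_apply, hDpt j]
    have h3 : (D ∘ p) 0 = 0 := by
      simp only [Function.comp_apply, hp0, map_zero]
    rw [h2, h3] at h1
    exact zero_ne_one (tendsto_nhds_unique h1 tendsto_const_nhds)
end

section
/- Let D : (ℕ → ℝ) → ℝ be an ℝ-linear map such that for every curve p : ℝ → (ℕ → ℝ) all of whose coordinate functions u ↦ p(u)(n) are infinitely differentiable, the composite D ∘ p : ℝ → ℝ is continuous. Then there exists N ∈ ℕ such that D(x) = 0 for every x ∈ ℕ → ℝ satisfying x(i) = 0 for all i < N. -/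
/-- Recursively chosen coefficients: `stmt2_c B a j` is chosen so that
`∑_{N ≤ j} stmt2_c B a N * B N j * a N = 1` whenever `B j j * a j ≠ 0`. -/
noncomputable def stmt2_c (B : ℕ → ℕ → ℝ) (a : ℕ → ℝ) : ℕ → ℝ
  | j => (1 - ∑ N ∈ (Finset.range j).attach,
      stmt2_c B a N * B (↑N) j * a ↑N) / (B j j * a j)
  decreasing_by exact Finset.mem_range.mp N.2

lemma stmt2_c_spec (B : ℕ → ℕ → ℝ) (a : ℕ → ℝ) (j : ℕ) (h : B j j * a j ≠ 0) :
    ∑ N ∈ Finset.range (j + 1), stmt2_c B a N * B N j * a N = 1 := by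
  rw [Finset.sum_range_succ]
  have hc : stmt2_c B a j = (1 - ∑ N ∈ Finset.range j,
      stmt2_c B a N * B N j * a N) / (B j j * a j) := by
    rw [stmt2_c]
    congr 1
    rw [← Finset.sum_attach (Finset.range j) (fun N => stmt2_c B a N * B N j * a N)]
  rw [hc, mul_assoc, div_mul_cancel₀ _ h]
  ring

/-- Key claim in the proof of Proposition 3.2: a linear functional on `ℕ → ℝ`
that is continuous along componentwise-smooth curves vanishes on the kernel of
the projection onto the first `N` coordinates, for some `N`. -/
theorem stmt_2 (D : (ℕ → ℝ) →ₗ[ℝ] ℝ)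
    (hD : ∀ p : ℝ → ℕ → ℝ, (∀ n, ContDiff ℝ (⊤ : ℕ∞) fun u => p u n) →
      Continuous (D ∘ p)) :
    ∃ N : ℕ, ∀ x : ℕ → ℝ, (∀ i < N, x i = 0) → D x = 0 := by
  by_contra h
  push_neg at h
  choose x hx0 hxD using h
  -- sample points u j = 1/(j+1), decreasing to 0
  set u : ℕ → ℝ := fun j => ((j : ℝ) + 1)⁻¹ with hu
  have hupos : ∀ j, 0 < u j := fun j => by positivity
  have humono : ∀ i j : ℕ, i < j → u j < u i := by
    intro i j hij
    apply inv_strictAnti₀ (by positivity)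
    have : (i : ℝ) < j := by exact_mod_cast hij
    linarith
  set a : ℕ → ℝ := fun N => D (x N) with ha
  set B : ℕ → ℕ → ℝ := fun N j => u j * ∏ i ∈ Finset.range N, (u j - u i) with hB
  set c : ℕ → ℝ := stmt2_c B a with hcdef
  set g : ℕ → ℝ → ℝ := fun N t => c N * (t * ∏ i ∈ Finset.range N, (t - u i)) with hg
  -- B j j ≠ 0
  have hBjj : ∀ j, B j j ≠ 0 := by
    intro j
    apply mul_ne_zero (ne_of_gt (hupos j))
    apply Finset.prod_ne_zero_iff.2
    intro i hi
    have := humono i j (Finset.mem_range.mp hi)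
    exact sub_ne_zero.2 (ne_of_lt this)
  -- B N j = 0 for j < N
  have hBzero : ∀ N j, j < N → B N j = 0 := by
    intro N j hj
    apply mul_eq_zero_of_right
    exact Finset.prod_eq_zero (Finset.mem_range.2 hj) (by simp)
  -- the curve
  set p : ℝ → ℕ → ℝ := fun t k => ∑ N ∈ Finset.range (k + 1), g N t * x N k with hp
  have hsmooth : ∀ k, ContDiff ℝ (⊤ : ℕ∞) fun t => p t k := by
    intro k
    have hprod : ∀ N, ContDiff ℝ (⊤ : ℕ∞) fun t : ℝ => ∏ i ∈ Finset.range N, (t - u i) := by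
      intro N
      induction N with
      | zero => simpa using contDiff_const
      | succ n ih =>
        simp only [Finset.prod_range_succ]
        exact ih.mul (contDiff_id.sub contDiff_const)
    apply ContDiff.sum
    intro N _
    exact ((contDiff_const.mul (contDiff_id.mul (hprod N))).mul contDiff_const)
  have hcont := hD p hsmooth
  -- p 0 = 0
  have hp0 : p 0 = 0 := by
    funext k
    simp [hp, hg]
  -- p (u j) is the finite combination ∑_{N ≤ j} (c N * B N j) • x N
  have hpu : ∀ j : ℕ, p (u j) = ∑ N ∈ Finset.range (j + 1), (c N * B N j) • x N := by
    intro j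
    funext k
    have hterm : ∀ N, g N (u j) * x N k = c N * B N j * x N k := by
      intro N
      simp only [hg, hB, mul_assoc]
    have hL : p (u j) k = ∑ N ∈ Finset.range (max j k + 1), c N * B N j * x N k := by
      simp only [hp]
      rw [Finset.sum_congr rfl (fun N _ => hterm N)]
      apply Finset.sum_subset
      · exact Finset.range_subset_range.2 (by omega)
      · intro N _ hN
        have : k < N := by simpa using Nat.lt_of_succ_le (Nat.not_lt.1 (by simpa using hN))
        rw [hx0 N k this, mul_zero]
    have hR : (∑ N ∈ Finset.range (j + 1), (c N * B N j) • x N) k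
        = ∑ N ∈ Finset.range (max j k + 1), c N * B N j * x N k := by
      rw [Finset.sum_apply]
      simp only [Pi.smul_apply, smul_eq_mul]
      apply Finset.sum_subset
      · exact Finset.range_subset_range.2 (by omega)
      · intro N _ hN
        have : j < N := by simpa using Nat.lt_of_succ_le (Nat.not_lt.1 (by simpa using hN))
        rw [hBzero N j this, mul_zero, zero_mul]
    rw [hL, ← hR]
  -- D (p (u j)) = 1
  have hDpu : ∀ j : ℕ, D (p (u j)) = 1 := by
    intro j
    rw [hpu j, map_sum]
    simp only [map_smul, smul_eq_mul]
    have := stmt2_c_spec B a j (mul_ne_zero (hBjj j) (hxD j))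
    rw [← this]
  -- contradiction with continuity at 0
  have htend : Filter.Tendsto u Filter.atTop (nhds 0) := by
    rw [hu]
    exact tendsto_one_div_add_atTop_nhds_zero_nat.congr (by intro m; rw [one_div])
  have h1 : Filter.Tendsto (fun j : ℕ => (D ∘ p) (u j)) Filter.atTop
      (nhds ((D ∘ p) 0)) := (hcont.tendsto 0).comp htend
  have h2 : (fun j : ℕ => (D ∘ p) (u j)) = fun _ => (1 : ℝ) := by
    funext j
    simp [Function.comp, hDpu j]
  have h3 : (D ∘ p) 0 = 0 := by simp [Function.comp, hp0, map_zero]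
  rw [h2, h3] at h1
  have := tendsto_nhds_unique h1 tendsto_const_nhds
  norm_num at this
end

section
/- Let D : (ℕ → ℝ) → ℝ be an ℝ-linear map such that for every N ∈ ℕ there exists x_N ∈ ℕ → ℝ with x_N(i) = 0 for all i < N and D(x_N) ≠ 0. Then there exists a map p : ℝ → (ℕ → ℝ) all of whose coordinate functions u ↦ p(u)(n) are infinitely differentiable, such that D ∘ p : ℝ → ℝ is not continuous at 0. -/
open Filter

section aux

/-- The sequence of points `t k = 1/(k+1)`, tending to `0`. -/
noncomputable def stmt4T (k : ℕ) : ℝ := ((k : ℝ) + 1)⁻¹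

lemma stmt4T_pos (k : ℕ) : 0 < stmt4T k := by unfold stmt4T; positivity

lemma stmt4T_inj : Function.Injective stmt4T := by
  intro j k h
  unfold stmt4T at h
  have h2 : ((j : ℝ) + 1) = (k : ℝ) + 1 := inv_inj.mp h
  exact_mod_cast (by linarith : (j : ℝ) = (k : ℝ))

/-- The polynomial `g k t = t * ∏_{j<k} (t - t j)`; it vanishes at `0` and at
`t j` for `j < k`, and is nonzero at `t k`. -/
noncomputable def stmt4G (k : ℕ) (t : ℝ) : ℝ :=
  t * ∏ j ∈ Finset.range k, (t - stmt4T j)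

lemma stmt4G_zero (k : ℕ) : stmt4G k 0 = 0 := by simp [stmt4G]

lemma stmt4G_eval_lt {m k : ℕ} (h : m < k) : stmt4G k (stmt4T m) = 0 := by
  unfold stmt4G
  rw [Finset.prod_eq_zero (Finset.mem_range.2 h) (by ring)]
  ring

lemma stmt4G_ne_zero (k : ℕ) : stmt4G k (stmt4T k) ≠ 0 := by
  unfold stmt4G
  apply mul_ne_zero (ne_of_gt (stmt4T_pos k))
  apply Finset.prod_ne_zero_iff.2
  intro j hj
  have hjk : j ≠ k := by
    have := Finset.mem_range.1 hj; omega
  exact sub_ne_zero.2 fun hc => hjk (stmt4T_inj hc).symm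

lemma stmt4G_contDiff (k : ℕ) : ContDiff ℝ (⊤ : ℕ∞) (stmt4G k) := by
  unfold stmt4G
  exact contDiff_id.mul
    (contDiff_prod fun j _ => contDiff_id.sub contDiff_const)

/-- Coefficients chosen by strong recursion so that
`∑_{k ≤ m} c k * g k (t m) * w k = m + 1`. -/
noncomputable def stmt4C (w : ℕ → ℝ) : ℕ → ℝ
  | m =>
    ((m : ℝ) + 1 - ∑ k ∈ (Finset.range m).attach,
        stmt4C w k * stmt4G k (stmt4T m) * w k) /
      (stmt4G m (stmt4T m) * w m)
  decreasing_by exact Finset.mem_range.1 k.2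

lemma stmt4C_spec (w : ℕ → ℝ) (hw : ∀ k, w k ≠ 0) (m : ℕ) :
    ∑ k ∈ Finset.range (m + 1), stmt4C w k * stmt4G k (stmt4T m) * w k
      = (m : ℝ) + 1 := by
  rw [Finset.sum_range_succ]
  have hne : stmt4G m (stmt4T m) * w m ≠ 0 :=
    mul_ne_zero (stmt4G_ne_zero m) (hw m)
  have hdef : stmt4C w m =
      ((m : ℝ) + 1 - ∑ k ∈ Finset.range m,
          stmt4C w k * stmt4G k (stmt4T m) * w k) /
        (stmt4G m (stmt4T m) * w m) := by
    rw [stmt4C]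
    congr 1
    rw [← Finset.sum_attach (Finset.range m)
      (fun k => stmt4C w k * stmt4G k (stmt4T m) * w k)]
  have hg := stmt4G_ne_zero m
  have hwm := hw m
  rw [hdef]
  field_simp
  ring

end aux

/-- The contradiction step in the proof of Proposition 3.2: if a linear
functional `D` on `ℕ → ℝ` does not vanish on the kernel of any finite
coordinate projection, then there is a componentwise-smooth curve `p` such
that `D ∘ p` is not continuous at `0`. -/
theorem stmt_4 (D : (ℕ → ℝ) →ₗ[ℝ] ℝ)
    (hD : ∀ N : ℕ, ∃ x : ℕ → ℝ, (∀ i < N, x i = 0) ∧ D x ≠ 0) :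
    ∃ p : ℝ → ℕ → ℝ,
      (∀ n, ContDiff ℝ (⊤ : ℕ∞) fun u => p u n) ∧
      ¬ ContinuousAt (D ∘ p) 0 := by
  classical
  set y : ℕ → ℕ → ℝ := fun k => (hD k).choose with hy
  have hyzero : ∀ k n, n < k → y k n = 0 := fun k n hn =>
    (hD k).choose_spec.1 n hn
  set w : ℕ → ℝ := fun k => D (y k) with hw
  have hwne : ∀ k, w k ≠ 0 := fun k => (hD k).choose_spec.2
  set c : ℕ → ℝ := stmt4C w with hc
  set p : ℝ → ℕ → ℝ :=
    fun t n => ∑ k ∈ Finset.range (n + 1), c k * stmt4G k t * y k n with hp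
  -- value of `p` at the points `t m` as a finite linear combination
  have hpt : ∀ m, p (stmt4T m) =
      ∑ k ∈ Finset.range (m + 1), (c k * stmt4G k (stmt4T m)) • y k := by
    intro m
    funext n
    simp only [hp, Finset.sum_apply, Pi.smul_apply, smul_eq_mul]
    -- both sides equal the sum over `range (max m n + 1)`
    have key : ∀ N, n ≤ N → m ≤ N →
        ∑ k ∈ Finset.range (N + 1), c k * stmt4G k (stmt4T m) * y k n
          = ∑ k ∈ Finset.range (n + 1), c k * stmt4G k (stmt4T m) * y k n := by
      intro N hn hm
      symm
      apply Finset.sum_subset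
      · exact Finset.range_subset_range.2 (by omega)
      · intro k _ hk
        have hnk : n < k := by
          have := Finset.mem_range.not.1 hk; omega
        rw [hyzero k n hnk]; ring
    have key2 : ∀ N, n ≤ N → m ≤ N →
        ∑ k ∈ Finset.range (N + 1), c k * stmt4G k (stmt4T m) * y k n
          = ∑ k ∈ Finset.range (m + 1), c k * stmt4G k (stmt4T m) * y k n := by
      intro N hn hm
      symm
      apply Finset.sum_subset
      · exact Finset.range_subset_range.2 (by omega)
      · intro k _ hk
        have hmk : m < k := by
          have := Finset.mem_range.not.1 hk; omega
        rw [stmt4G_eval_lt hmk]; ring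
    rw [← key (max m n) (le_max_right m n) (le_max_left m n),
      key2 (max m n) (le_max_right m n) (le_max_left m n)]
  have hDpt : ∀ m, D (p (stmt4T m)) = (m : ℝ) + 1 := by
    intro m
    rw [hpt m, map_sum]
    simp only [map_smul, smul_eq_mul]
    exact stmt4C_spec w hwne m
  have hp0 : p 0 = 0 := by
    funext n
    simp only [hp]
    apply Finset.sum_eq_zero
    intro k _
    rw [stmt4G_zero]; ring
  refine ⟨p, ?_, ?_⟩
  · intro n
    simp only [hp]
    apply ContDiff.sum
    intro k _
    exact (contDiff_const.mul (stmt4G_contDiff k)).mul contDiff_const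
  · intro hcont
    have ht0 : Tendsto stmt4T atTop (nhds 0) := by
      have := tendsto_one_div_add_atTop_nhds_zero_nat (𝕜 := ℝ)
      simp only [one_div] at this
      exact this
    have h1 : Tendsto (fun m => (D ∘ p) (stmt4T m)) atTop (nhds ((D ∘ p) 0)) :=
      (hcont.tendsto).comp ht0
    have h2 : (D ∘ p) 0 = 0 := by simp [Function.comp, hp0]
    have h3 : (fun m => (D ∘ p) (stmt4T m)) = fun m : ℕ => (m : ℝ) + 1 := by
      funext m
      simp [Function.comp, hDpt m]
    rw [h2, h3] at h1
    have h4 : Tendsto (fun m : ℕ => (m : ℝ) + 1) atTop atTop :=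
      tendsto_atTop_add_const_right _ 1 tendsto_natCast_atTop_atTop
    exact not_tendsto_nhds_of_tendsto_atTop h4 0 h1
end

section
/- There exists an ℝ-linear map D : (ℕ → ℝ) → ℝ and a curve p : ℝ → (ℕ → ℝ), all of whose coordinate functions u ↦ p(u)(n) are infinitely differentiable, such that D ∘ p : ℝ → ℝ is not continuous. In particular, there exists a linear functional on ∏_{n∈ℕ} ℝ that is not smooth with respect to the product diffeology. -/
open Filter Topology Real

/-- The subspace of convergent sequences in `ℕ → ℝ`. -/
noncomputable def convSub : Submodule ℝ (ℕ → ℝ) where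
  carrier := {x | ∃ l, Tendsto x atTop (𝓝 l)}
  add_mem' := fun ⟨a, ha⟩ ⟨b, hb⟩ => ⟨a + b, ha.add hb⟩
  zero_mem' := ⟨0, tendsto_const_nhds⟩
  smul_mem' := fun c _ ⟨a, ha⟩ => ⟨c • a, ha.const_smul c⟩

/-- The limit functional on convergent sequences. -/
noncomputable def limFun : convSub →ₗ[ℝ] ℝ where
  toFun x := x.2.choose
  map_add' x y := tendsto_nhds_unique (x + y).2.choose_spec
    (x.2.choose_spec.add y.2.choose_spec)
  map_smul' c x := tendsto_nhds_unique (c • x).2.choose_spec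
    (x.2.choose_spec.const_smul c)

theorem limFun_eq (x : convSub) (l : ℝ) (h : Tendsto (x : ℕ → ℝ) atTop (𝓝 l)) :
    limFun x = l :=
  tendsto_nhds_unique x.2.choose_spec h

/-- Main point (Theorem 3.1): there is a linear functional on `∏_{n∈ℕ} ℝ`
that is not smooth for the product diffeology — concretely, a linear `D` and
a componentwise-smooth curve `p` with `D ∘ p` not continuous. -/
theorem stmt_7 :
    ∃ (D : (ℕ → ℝ) →ₗ[ℝ] ℝ) (p : ℝ → ℕ → ℝ),
      (∀ n, ContDiff ℝ (⊤ : ℕ∞) fun u => p u n) ∧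
      ¬ Continuous (D ∘ p) := by
  obtain ⟨D, hD⟩ := limFun.exists_extend
  set p : ℝ → ℕ → ℝ := fun u n => Real.arctan (n * u) with hp
  have hDval : ∀ (u : ℝ) (l : ℝ), Tendsto (fun n : ℕ => p u n) atTop (𝓝 l) →
      D (p u) = l := by
    intro u l h
    have hmem : p u ∈ convSub := ⟨l, h⟩
    have : D (p u) = limFun ⟨p u, hmem⟩ := by
      have := congrArg (fun f => f ⟨p u, hmem⟩) hD
      simpa using this
    rw [this]
    exact limFun_eq _ _ h
  refine ⟨D, p, ?_, ?_⟩
  · intro n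
    exact Real.contDiff_arctan.comp (contDiff_const.mul contDiff_id)
  · intro hcont
    have h0 : D (p 0) = 0 := by
      apply hDval
      simp [hp, Real.arctan_zero]
    have hpos : ∀ u : ℝ, 0 < u → D (p u) = π / 2 := by
      intro u hu
      apply hDval
      have h1 : Tendsto (fun n : ℕ => (n : ℝ) * u) atTop atTop :=
        tendsto_natCast_atTop_atTop.atTop_mul_const hu
      exact (Real.tendsto_arctan_atTop.mono_right nhdsWithin_le_nhds).comp h1
    have hseq : Tendsto (fun k : ℕ => (1 : ℝ) / (k + 1)) atTop (𝓝 0) :=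
      tendsto_one_div_add_atTop_nhds_zero_nat
    have := (hcont.tendsto 0).comp hseq
    have heq : (fun k : ℕ => (D ∘ p) ((1 : ℝ) / (k + 1))) = fun _ => π / 2 := by
      funext k
      exact hpos _ (by positivity)
    rw [show (D ∘ p) 0 = 0 from h0] at this
    rw [show ((D ∘ p) ∘ fun k : ℕ => (1 : ℝ) / (k + 1)) = fun _ => π / 2 from heq] at this
    have := tendsto_nhds_unique this tendsto_const_nhds
    have hπ := Real.pi_pos
    linarith
end

section
/- Let D : (ℕ → ℝ) → ℝ be an ℝ-linear map. Then the following are equivalent: (1) for every curve p : ℝ → (ℕ → ℝ) all of whose coordinate functions u ↦ p(u)(n) are infinitely differentiable, the composite D ∘ p : ℝ → ℝ is infinitely differentiable; (2) D lies in the linear span of the coordinate projections e_i^* : x ↦ x(i), i ∈ ℕ, i.e., D is a finite linear combination of coordinate projections. -/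
open Filter Finset

/-- A linear functional on `ℕ → ℝ` is smooth along all componentwise-smooth
curves iff it lies in the span of the coordinate projections. This identifies
the smooth dual of `∏_{n∈ℕ} ℝ` with `⊕_{n∈ℕ} ℝ`. -/
theorem stmt_8 (D : (ℕ → ℝ) →ₗ[ℝ] ℝ) :
    (∀ p : ℝ → ℕ → ℝ, (∀ n, ContDiff ℝ (⊤ : ℕ∞) fun u => p u n) →
        ContDiff ℝ (⊤ : ℕ∞) (D ∘ p)) ↔
    D ∈ Submodule.span ℝ
      (Set.range fun i : ℕ => (LinearMap.proj i : (ℕ → ℝ) →ₗ[ℝ] ℝ)) := by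
  constructor
  · intro h
    by_contra hD
    -- for every N there is a vector vanishing on the first N coordinates not killed by D
    have key : ∀ N : ℕ, ∃ x : ℕ → ℝ, (∀ i < N, x i = 0) ∧ D x ≠ 0 := by
      intro N
      by_contra hx
      push_neg at hx
      apply hD
      have hDeq : D = ∑ i ∈ Finset.range N,
          D (Pi.single i 1) • (LinearMap.proj i : (ℕ → ℝ) →ₗ[ℝ] ℝ) := by
        ext z
        have h0 : D (z - ∑ i ∈ Finset.range N, z i • (Pi.single i 1 : ℕ → ℝ)) = 0 := by
          apply hx
          intro i hi
          simp only [Pi.sub_apply, Finset.sum_apply, Pi.smul_apply]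
          rw [Finset.sum_eq_single i]
          · simp
          · intro b _ hb; simp [Pi.single_apply, hb]
          · intro hni; exact absurd (Finset.mem_range.mpr hi) hni
        rw [map_sub, sub_eq_zero] at h0
        rw [h0, map_sum]
        simp [LinearMap.sum_apply, LinearMap.smul_apply, LinearMap.proj_apply,
          map_smul, mul_comm]
      rw [hDeq]
      exact Submodule.sum_mem _ fun i _ =>
        Submodule.smul_mem _ _ (Submodule.subset_span ⟨i, rfl⟩)
    choose x hx0 hxD using key
    set y : ℕ → ℕ → ℝ := fun n => (D (x n))⁻¹ • x n with hy
    have hDy : ∀ n, D (y n) = 1 := by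
      intro n
      show D ((D (x n))⁻¹ • x n) = 1
      rw [map_smul, smul_eq_mul, inv_mul_cancel₀ (hxD n)]
    have hy0 : ∀ n, ∀ i < n, y n i = 0 := by
      intro n i hi
      show (D (x n))⁻¹ * x n i = 0
      rw [hx0 n i hi, mul_zero]
    -- bump functions with disjoint supports accumulating at 0
    set s : ℕ → Set ℝ := fun n => Set.Ioo (1 / ((n:ℝ) + 2)) (1 / ((n:ℝ) + 1)) with hs
    set t : ℕ → ℝ := fun n => (1 / ((n:ℝ) + 2) + 1 / ((n:ℝ) + 1)) / 2 with ht
    have hts : ∀ n, t n ∈ s n := by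
      intro n
      have h1 : 1 / ((n:ℝ) + 2) < 1 / ((n:ℝ) + 1) := by
        apply one_div_lt_one_div_of_lt (by positivity); linarith
      simp only [hs, ht, Set.mem_Ioo]; constructor <;> linarith
    have hdisj : ∀ n m u, u ∈ s n → u ∈ s m → n = m := by
      intro n m u hn hm
      simp only [hs, Set.mem_Ioo] at hn hm
      by_contra hne
      rcases Nat.lt_or_gt_of_ne hne with hlt | hlt
      · have : 1 / ((m:ℝ) + 1) ≤ 1 / ((n:ℝ) + 2) := by
          apply one_div_le_one_div_of_le (by positivity)
          have : (n:ℝ) + 1 ≤ m := by exact_mod_cast hlt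
          linarith
        linarith [hn.1, hm.2]
      · have : 1 / ((n:ℝ) + 1) ≤ 1 / ((m:ℝ) + 2) := by
          apply one_div_le_one_div_of_le (by positivity)
          have : (m:ℝ) + 1 ≤ n := by exact_mod_cast hlt
          linarith
        linarith [hm.1, hn.2]
    have hbump : ∀ n, ∃ f : ℝ → ℝ, tsupport f ⊆ s n ∧ ContDiff ℝ (⊤ : ℕ∞) f ∧ f (t n) = 1 := by
      intro n
      obtain ⟨f, hf1, _, hf3, _, hf5⟩ :=
        exists_contDiff_tsupport_subset (n := (⊤ : ℕ∞)) (isOpen_Ioo.mem_nhds (hts n))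
      exact ⟨f, hf1, hf3, hf5⟩
    choose f hfs hfsm hft using hbump
    have hf0 : ∀ n u, u ∉ s n → f n u = 0 := fun n u hu =>
      image_eq_zero_of_notMem_tsupport (fun h => hu (hfs n h))
    set p : ℝ → ℕ → ℝ := fun u k => ∑ n ∈ Finset.range (k + 1), f n u * y n k with hp
    have hpsm : ∀ k, ContDiff ℝ (⊤ : ℕ∞) fun u => p u k := by
      intro k
      apply ContDiff.sum
      intro n _
      exact (hfsm n).mul contDiff_const
    have hpt : ∀ m, p (t m) = y m := by
      intro m; funext k
      simp only [hp]
      by_cases hmk : m < k + 1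
      · rw [Finset.sum_eq_single m]
        · rw [hft m, one_mul]
        · intro b _ hb; rw [hf0 b (t m) (fun h => hb (hdisj b m _ h (hts m))), zero_mul]
        · intro h; exact absurd (Finset.mem_range.mpr hmk) h
      · rw [hy0 m k (by omega)]
        apply Finset.sum_eq_zero
        intro b hb
        have hb' : b ≠ m := by simp at hb; omega
        rw [hf0 b (t m) (fun h => hb' (hdisj b m _ h (hts m))), zero_mul]
    have hp0 : p 0 = 0 := by
      funext k; simp only [hp, Pi.zero_apply]
      apply Finset.sum_eq_zero; intro b _
      have hb2 : (0:ℝ) < 1 / ((b:ℝ) + 2) := by positivity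
      rw [hf0 b 0 (fun h => by simp only [hs, Set.mem_Ioo] at h; linarith [h.1]), zero_mul]
    have hcont : Continuous (D ∘ p) := (h p hpsm).continuous
    have htlim : Tendsto t atTop (nhds 0) := by
      apply tendsto_of_tendsto_of_tendsto_of_le_of_le tendsto_const_nhds
        (tendsto_one_div_add_atTop_nhds_zero_nat (𝕜 := ℝ))
      · intro n
        have hb2 : (0:ℝ) < 1 / ((n:ℝ) + 2) := by positivity
        exact le_of_lt (lt_trans hb2 (hts n).1)
      · intro n; exact (hts n).2.le
    have hlim := (hcont.tendsto 0).comp htlim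
    have hval : (D ∘ p) ∘ t = fun _ => (1:ℝ) := by
      funext m; simp only [Function.comp_apply, hpt m, hDy m]
    rw [hval, Function.comp_apply, hp0, map_zero] at hlim
    exact one_ne_zero (tendsto_nhds_unique tendsto_const_nhds hlim)
  · intro hD p hsm
    induction hD using Submodule.span_induction with
    | mem f hf =>
      obtain ⟨i, rfl⟩ := hf
      exact hsm i
    | zero =>
      have : (⇑(0 : (ℕ → ℝ) →ₗ[ℝ] ℝ) ∘ p) = fun _ => (0:ℝ) := by funext u; simp
      rw [this]; exact contDiff_const
    | add f g _ _ hf hg =>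
      have : ((f + g) ∘ p) = (f ∘ p) + (g ∘ p) := by funext u; simp
      rw [this]; exact hf.add hg
    | smul a f _ hf =>
      have : ((a • f) ∘ p) = a • (f ∘ p) := by funext u; simp
      rw [this]; exact hf.const_smul a
end
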